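/- If a polymatroidal ideal I in K[x_1,...,x_n] satisfies the strong exchange property, then I = u·I_{(d; a_1,...,a_n)} for some Veronese type ideal I_{(d; a_1,...,a_n)}, where u is the greatest common divisor of the minimal generators of I. -/

import Mathlib

/-- A monomial in `K[x_1,...,x_n]` is identified with its exponent vector. -/
abbrev Mon (n : ℕ) := Fin n → ℕ

/-- Total degree of a monomial. -/
def degree {n : ℕ} (u : Mon n) : ℕ := ∑ i, u i

/-- A monomial ideal is identified with the set of exponent vectors of the monomials it
contains; this set is closed under multiplication by monomials. -/
def IsMonomialIdeal {n : ℕ} (I : Set (Mon n)) : Prop :=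
  ∀ u ∈ I, ∀ w : Mon n, u + w ∈ I

/-- The minimal monomial generating set `G(I)` of a monomial ideal: monomials of `I`
minimal with respect to divisibility (pointwise `≤` of exponent vectors). -/
def minGens {n : ℕ} (I : Set (Mon n)) : Set (Mon n) :=
  {u | u ∈ I ∧ ∀ v ∈ I, v ≤ u → v = u}

/-- `exch v i j` is the exponent vector of `x_j * (v / x_i)` (for `i ≠ j`). -/
def exch {n : ℕ} (v : Mon n) (i j : Fin n) : Mon n :=
  fun k => if k = i then v k - 1 else if k = j then v k + 1 else v k

/-- `component I d` is the ideal `I_⟨d⟩` generated by the degree-`d` monomials of `I`. -/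
def component {n : ℕ} (I : Set (Mon n)) (d : ℕ) : Set (Mon n) :=
  {w | ∃ u ∈ I, degree u = d ∧ u ≤ w}

/-- `I` is generated in a single degree. -/
def GeneratedInSingleDegree {n : ℕ} (I : Set (Mon n)) : Prop :=
  ∃ d, ∀ u ∈ minGens I, degree u = d

/-- A polymatroidal ideal: generated in a single degree and its generators satisfy the
exchange property. -/
def IsPolymatroidal {n : ℕ} (I : Set (Mon n)) : Prop :=
  GeneratedInSingleDegree I ∧
  ∀ u ∈ minGens I, ∀ v ∈ minGens I, ∀ i : Fin n, v i < u i →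
    ∃ j : Fin n, u j < v j ∧ exch u i j ∈ I

/-- Componentwise polymatroidal: each graded component ideal `I_⟨d⟩` is polymatroidal. -/
def ComponentwisePolymatroidal {n : ℕ} (I : Set (Mon n)) : Prop :=
  ∀ d : ℕ, IsPolymatroidal (component I d)

/-- Non-pure dual exchange property: for `u, v ∈ G(I)` with `deg u ≤ deg v` and
`deg_{x_i} v < deg_{x_i} u` there is `j` with `deg_{x_j} v > deg_{x_j} u` and
`x_i * (v / x_j) ∈ I`. -/
def NonPureDualExchange {n : ℕ} (I : Set (Mon n)) : Prop :=
  ∀ u ∈ minGens I, ∀ v ∈ minGens I, degree u ≤ degree v →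
    ∀ i : Fin n, v i < u i → ∃ j : Fin n, u j < v j ∧ exch v j i ∈ I

/-- Non-pure exchange property: for `u, v ∈ G(I)` with `deg u ≤ deg v` and
`deg_{x_i} v > deg_{x_i} u` there is `j` with `deg_{x_j} v < deg_{x_j} u` and
`x_j * (v / x_i) ∈ I`. -/
def NonPureExchange {n : ℕ} (I : Set (Mon n)) : Prop :=
  ∀ u ∈ minGens I, ∀ v ∈ minGens I, degree u ≤ degree v →
    ∀ i : Fin n, u i < v i → ∃ j : Fin n, v j < u j ∧ exch v i j ∈ I

/-- The monomial ideal generated by a set `G` of monomials. -/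
def genBy {n : ℕ} (G : Set (Mon n)) : Set (Mon n) := {w | ∃ u ∈ G, u ≤ w}

/-- The product of two monomial ideals (as sets of monomials). -/
def mulIdeal {n : ℕ} (I J : Set (Mon n)) : Set (Mon n) :=
  {w | ∃ u ∈ I, ∃ v ∈ J, w = u + v}

/-- The product of a monomial ideal with the monomial `u`. -/
def mulMon {n : ℕ} (u : Mon n) (I : Set (Mon n)) : Set (Mon n) :=
  (fun v => u + v) '' I

/-- Strong exchange property: for all generators `u, v` and all `i, j` with
`deg_{x_i} u > deg_{x_i} v` and `deg_{x_j} u < deg_{x_j} v`, `x_j * (u / x_i) ∈ I`. -/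
def StrongExchange {n : ℕ} (I : Set (Mon n)) : Prop :=
  ∀ u ∈ minGens I, ∀ v ∈ minGens I, ∀ i j : Fin n,
    v i < u i → u j < v j → exch u i j ∈ I

/-- The Veronese type ideal `I_{(d; a_1,...,a_n)}`: generated by all monomials of
degree `d` with `deg_{x_i} ≤ a i` for all `i`. -/
def veronese (n d : ℕ) (a : Fin n → ℕ) : Set (Mon n) :=
  {w | ∃ u : Mon n, degree u = d ∧ (∀ i, u i ≤ a i) ∧ u ≤ w}

/-- A list of monomials is an admissible order if each colon ideal
`(u_1,...,u_{i-1}) : u_i` is generated by a subset `S` of the variables. -/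
def AdmissibleOrder {n : ℕ} (L : List (Mon n)) : Prop :=
  ∀ i : Fin L.length, ∃ S : Set (Fin n),
    ∀ w : Mon n, (w + L.get i ∈ genBy {u | u ∈ L.take i.1}) ↔ ∃ k ∈ S, 1 ≤ w k

/-- `I` has linear quotients: some ordering of `G(I)` is admissible. -/
def HasLinearQuotients {n : ℕ} (I : Set (Mon n)) : Prop :=
  ∃ L : List (Mon n), L.Nodup ∧ (∀ u, u ∈ L ↔ u ∈ minGens I) ∧ AdmissibleOrder L

/-- `I` can be extended by linear quotients to `J`: `G(I) ⊆ G(J)` and the elements of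
`G(J) \ G(I)` can be ordered `v_1,...,v_m` such that each colon ideal
`(G(I), v_1,...,v_i) : v_{i+1}` is generated by a subset of the variables. -/
def ExtendsByLinearQuotients {n : ℕ} (I J : Set (Mon n)) : Prop :=
  I ⊆ J ∧ minGens I ⊆ minGens J ∧
  ∃ L : List (Mon n), L.Nodup ∧ (∀ u, u ∈ L ↔ u ∈ minGens J ∧ u ∉ minGens I) ∧
    ∀ i : Fin L.length, ∃ S : Set (Fin n),
      ∀ w : Mon n,
        (w + L.get i ∈ genBy (minGens I ∪ {u | u ∈ L.take i.1})) ↔ ∃ k ∈ S, 1 ≤ w k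

/-- The minimal generators of `I ⊆ K[x,y]` are `u_i = x^{a i} y^{b i}`, `i = 0,...,m`,
with `a` strictly decreasing, `b` strictly increasing, `a m = 0` and `b 0 = 0`
(so `I` is `(x,y)`-primary). -/
def yxTightGens (m : ℕ) (a b : ℕ → ℕ) (I : Set (Mon 2)) : Prop :=
  (∀ i k : ℕ, i ≤ m → k ≤ m → i < k → a k < a i ∧ b i < b k) ∧
  a m = 0 ∧ b 0 = 0 ∧
  minGens I = {u | ∃ i ≤ m, u = ![a i, b i]}

/-- `I` is `x`-tight in `[0, r]`: the `x`-exponents of the generators are exactly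
`r, r-1, ..., 1, 0` (i.e. `a (r - i) = i`). -/
def xTight (I : Set (Mon 2)) (r : ℕ) : Prop :=
  ∃ b : ℕ → ℕ, yxTightGens r (fun i => r - i) b I

/-- `I` is `y`-tight in `[0, s]`: the `y`-exponents of the generators are exactly
`0, 1, ..., s`. -/
def yTight (I : Set (Mon 2)) (s : ℕ) : Prop :=
  ∃ a : ℕ → ℕ, yxTightGens s a (fun i => i) I

/-- `I` is `yx`-tight: there is `0 ≤ j ≤ m` with `b i = i` for `i = 0,...,j` and
`a (m - i) = i` for `i = 0,...,m-j`. -/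
def yxTight (I : Set (Mon 2)) : Prop :=
  ∃ (m : ℕ) (a b : ℕ → ℕ), yxTightGens m a b I ∧
    ∃ j ≤ m, (∀ i ≤ j, b i = i) ∧ ∀ i ≤ m - j, a (m - i) = i

/-- Powers of a monomial ideal. -/
def powIdeal {n : ℕ} (I : Set (Mon n)) : ℕ → Set (Mon n)
  | 0 => Set.univ
  | k + 1 => mulIdeal (powIdeal I k) I

/-! Let `G` be the set of minimal generators, all of degree `D`, and let `u` and `h` be the
coordinatewise minimum and maximum of `G` (its gcd and lcm). We show that `G` consists of all
monomials `t` of degree `D` with `u ≤ t ≤ h`; these generate `u · I_{(D - deg u; h - u)}`.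

Given a generator `g ≠ t`, there are `i` with `g_i > t_i` and `j` with `g_j < t_j`. Starting from
a generator whose `x_j`-degree is `h_j`, repeated strong exchanges against a generator whose
`x_i`-degree is `u_i` lower the `x_i`-degree down to `u_i` without lowering any other exponent.
The resulting generator `v'` has `v'_i < g_i` and `v'_j > g_j`, so the strong exchange property
puts `x_j · g / x_i` in `I`, hence in `G` by degree, and it is strictly closer to `t`. -/

section Degree

variable {n : ℕ}

lemma degree_add (v w : Mon n) : degree (v + w) = degree v + degree w :=
  Finset.sum_add_distrib

lemma degree_mono : Monotone (degree (n := n)) :=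
  fun _ _ h => Finset.sum_le_sum fun i _ => h i

lemma degree_single (i : Fin n) (k : ℕ) : degree (Pi.single i k : Mon n) = k := by
  simp [degree, Finset.sum_pi_single']

lemma apply_le_degree (v : Mon n) (i : Fin n) : v i ≤ degree v :=
  Finset.single_le_sum (fun _ _ => Nat.zero_le _) (Finset.mem_univ i)

lemma eq_of_le_of_degree_le {v w : Mon n} (h : v ≤ w) (hd : degree w ≤ degree v) : v = w :=
  funext <| by
    simpa using (Finset.sum_eq_sum_iff_of_le fun i _ => h i).1 (le_antisymm (degree_mono h) hd)

lemma exists_lt_of_degree_eq {v w : Mon n} (hvw : degree v = degree w) {i : Fin n}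
    (hi : w i < v i) : ∃ j, v j < w j := by
  by_contra! h
  have : degree w < degree v := Finset.sum_lt_sum (fun j _ => h j) ⟨i, Finset.mem_univ i, hi⟩
  omega

lemma exch_add_single {v : Mon n} {i j : Fin n} (hij : i ≠ j) (hv : 1 ≤ v i) :
    exch v i j + Pi.single i 1 = v + Pi.single j 1 := by
  ext k
  by_cases hki : k = i <;> by_cases hkj : k = j <;> simp_all [exch]

lemma degree_exch {v : Mon n} {i j : Fin n} (hij : i ≠ j) (hv : 1 ≤ v i) :
    degree (exch v i j) = degree v := by
  have h := congrArg degree (exch_add_single hij hv)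
  rw [degree_add, degree_add, degree_single, degree_single] at h
  omega

lemma le_exch_apply (v : Mon n) {i k : Fin n} (j : Fin n) (hk : k ≠ i) : v k ≤ exch v i j k := by
  simp only [exch, if_neg hk]
  split_ifs <;> omega

lemma degree_exch_tsub_lt {g t : Mon n} {i j : Fin n} (hi : t i < g i) (hj : g j < t j) :
    degree (exch g i j - t) < degree (g - t) := by
  refine Finset.sum_lt_sum (fun k _ => ?_) ⟨i, Finset.mem_univ i, ?_⟩
  · simp only [Pi.sub_apply, exch]
    split_ifs <;> subst_vars <;> omega
  · simp only [Pi.sub_apply, exch, ↓reduceIte]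
    omega

end Degree

lemma IsGLB.exists_apply_eq {ι : Type*} {s : Set (ι → ℕ)} {f : ι → ℕ} (hf : IsGLB s f)
    (hs : s.Nonempty) (i : ι) : ∃ x ∈ s, x i = f i := by
  have hfi := isGLB_pi.1 hf i
  exact hfi.csInf_eq (hs.image _) ▸ Nat.sInf_mem (hs.image _)

lemma IsLUB.exists_apply_eq {ι : Type*} {s : Set (ι → ℕ)} {f : ι → ℕ} (hf : IsLUB s f)
    (hs : s.Nonempty) (i : ι) : ∃ x ∈ s, x i = f i := by
  have hfi := isLUB_pi.1 hf i
  exact hfi.csSup_eq (hs.image _) ▸ Nat.sSup_mem (hs.image _) hfi.bddAbove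

section MonomialIdeal

variable {n : ℕ} {I : Set (Mon n)}

lemma exists_mem_minGens_le {x : Mon n} (hx : x ∈ I) : ∃ g ∈ minGens I, g ≤ x := by
  obtain ⟨g, hgx, hg, hmin⟩ := exists_minimal_le_of_wellFoundedLT (· ∈ I) x hx
  exact ⟨g, ⟨hg, fun v hv hvg => le_antisymm hvg (hmin hv hvg)⟩, hgx⟩

lemma eq_genBy_minGens (hI : IsMonomialIdeal I) : I = genBy (minGens I) := by
  ext x
  refine ⟨fun hx => exists_mem_minGens_le hx, ?_⟩
  rintro ⟨g, hg, hgx⟩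
  simpa only [add_tsub_cancel_of_le hgx] using hI g hg.1 (x - g)

lemma mulMon_veronese_eq_genBy (u : Mon n) (d : ℕ) (a : Fin n → ℕ) :
    mulMon u (veronese n d a) = genBy {t | degree t = degree u + d ∧ u ≤ t ∧ t ≤ u + a} := by
  ext x
  constructor
  · rintro ⟨w, ⟨m, hm, hma, hmw⟩, rfl⟩
    exact ⟨u + m, ⟨by rw [degree_add, hm], le_self_add, add_le_add le_rfl hma⟩,
      add_le_add le_rfl hmw⟩
  · rintro ⟨t, ⟨hdt, hut, hta⟩, htx⟩
    have hdeg : degree u + degree (t - u) = degree t := by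
      rw [← degree_add, add_tsub_cancel_of_le hut]
    refine ⟨x - u, ⟨t - u, by omega, fun i => tsub_le_iff_left.2 (hta i),
      tsub_le_tsub_right htx u⟩, add_tsub_cancel_of_le (hut.trans htx)⟩

variable {D : ℕ} (hdeg : ∀ g ∈ minGens I, degree g = D)
include hdeg

lemma mem_minGens_of_degree_eq {x : Mon n} (hx : x ∈ I) (hdx : degree x = D) :
    x ∈ minGens I := by
  obtain ⟨g, hg, hgx⟩ := exists_mem_minGens_le hx
  rwa [← eq_of_le_of_degree_le hgx (by rw [hdx, hdeg g hg])]

variable (hse : StrongExchange I)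
include hse

lemma exch_mem_minGens {g v : Mon n} (hg : g ∈ minGens I) (hv : v ∈ minGens I) {i j : Fin n}
    (hi : v i < g i) (hj : g j < v j) : exch g i j ∈ minGens I := by
  have hij : i ≠ j := by rintro rfl; omega
  exact mem_minGens_of_degree_eq hdeg (hse g hg v hv i j hi hj)
    ((degree_exch hij (by omega)).trans (hdeg g hg))

lemma exists_mem_minGens_apply_le {v w : Mon n} (hv : v ∈ minGens I) (hw : w ∈ minGens I)
    (i : Fin n) : ∃ v' ∈ minGens I, v' i ≤ w i ∧ ∀ k ≠ i, v k ≤ v' k := by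
  induction hN : v i - w i generalizing v with
  | zero => exact ⟨v, hv, by omega, fun _ _ => le_rfl⟩
  | succ N ih =>
    have hi : w i < v i := by omega
    obtain ⟨j, hj⟩ := exists_lt_of_degree_eq ((hdeg v hv).trans (hdeg w hw).symm) hi
    obtain ⟨v', hv', hv'i, hv'k⟩ := ih (exch_mem_minGens hdeg hse hv hw hi hj)
      (by simp only [exch, ↓reduceIte]; omega)
    exact ⟨v', hv', hv'i, fun k hk => (le_exch_apply v j hk).trans (hv'k k hk)⟩

lemma mem_minGens_of_le_of_le {l h : Mon n} (hl : ∀ i, ∃ w ∈ minGens I, w i ≤ l i)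
    (hh : ∀ i, ∃ v ∈ minGens I, h i ≤ v i) {g t : Mon n} (hg : g ∈ minGens I)
    (hdt : degree t = D) (hlt : l ≤ t) (hth : t ≤ h) : t ∈ minGens I := by
  induction hN : degree (g - t) using Nat.strong_induction_on generalizing g with
  | _ N ih =>
    by_cases hgt : g ≤ t
    · rwa [← eq_of_le_of_degree_le hgt (by rw [hdt, hdeg g hg])]
    obtain ⟨i, hi⟩ : ∃ i, t i < g i := by simpa [Pi.le_def] using hgt
    obtain ⟨j, hj⟩ := exists_lt_of_degree_eq ((hdeg g hg).trans hdt.symm) hi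
    have hij : i ≠ j := by rintro rfl; omega
    obtain ⟨w, hw, hwi⟩ := hl i
    obtain ⟨v, hv, hvj⟩ := hh j
    obtain ⟨v', hv', hv'i, hv'k⟩ := exists_mem_minGens_apply_le hdeg hse hv hw i
    have hg' := exch_mem_minGens hdeg hse hg hv'
      (show v' i < g i by have : l i ≤ t i := hlt i; omega)
      (show g j < v' j by have : t j ≤ h j := hth j; have := hv'k j hij.symm; omega)
    exact ih _ (hN ▸ degree_exch_tsub_lt hi hj) hg' rfl

theorem minGens_eq_of_strongExchange {l h : Mon n} (hl : IsGLB (minGens I) l)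
    (hh : IsLUB (minGens I) h) (hne : (minGens I).Nonempty) :
    minGens I = {t | degree t = D ∧ l ≤ t ∧ t ≤ h} := by
  refine Set.Subset.antisymm (fun g hg => ⟨hdeg g hg, hl.1 hg, hh.1 hg⟩) ?_
  rintro t ⟨hdt, hlt, hth⟩
  exact mem_minGens_of_le_of_le hdeg hse
    (fun i => (hl.exists_apply_eq hne i).imp fun _ ⟨hw, hwi⟩ => ⟨hw, hwi.le⟩)
    (fun i => (hh.exists_apply_eq hne i).imp fun _ ⟨hv, hvi⟩ => ⟨hv, hvi.ge⟩)
    hne.some_mem hdt hlt hth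

end MonomialIdeal

/-- a polymatroidal ideal with the strong exchange property equals
`u · I_{(d; a_1,...,a_n)}` where `u` is the gcd of its minimal generators. -/
theorem stmt_17 {n : ℕ} (I : Set (Mon n)) (hI : IsMonomialIdeal I)
    (hpoly : IsPolymatroidal I) (hse : StrongExchange I)
    (u : Mon n)
    (hlb : ∀ v ∈ minGens I, u ≤ v)
    (hglb : ∀ w : Mon n, (∀ v ∈ minGens I, w ≤ v) → w ≤ u) :
    ∃ (d : ℕ) (a : Fin n → ℕ), I = mulMon u (veronese n d a) := by
  obtain ⟨D, hdeg⟩ := hpoly.1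
  rw [eq_genBy_minGens hI]
  rcases (minGens I).eq_empty_or_nonempty with hG | ⟨g₀, hg₀⟩
  · refine ⟨1, 0, ?_⟩
    rw [mulMon_veronese_eq_genBy, hG]
    congr 1
    refine (Set.eq_empty_of_forall_notMem fun t ht => ?_).symm
    obtain ⟨hdt, hut, htu⟩ := ht
    rw [le_antisymm (add_zero u ▸ htu) hut] at hdt
    omega
  have hu : IsGLB (minGens I) u := ⟨hlb, hglb⟩
  obtain ⟨h, hh⟩ : ∃ h, IsLUB (minGens I) h := ⟨_, isLUB_csSup ⟨g₀, hg₀⟩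
    ⟨fun _ => D, fun v hv i => hdeg v hv ▸ apply_le_degree v i⟩⟩
  have hdu : degree u ≤ D := hdeg g₀ hg₀ ▸ degree_mono (hlb g₀ hg₀)
  refine ⟨D - degree u, h - u, ?_⟩
  rw [mulMon_veronese_eq_genBy, add_tsub_cancel_of_le ((hlb g₀ hg₀).trans (hh.1 hg₀)),
    add_tsub_cancel_of_le hdu, minGens_eq_of_strongExchange hdeg hse hu hh ⟨g₀, hg₀⟩]
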